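/- Let (X,d) be an unbounded metric space and p ∈ X. If p(S_p(X), ∞) = 0, then there exists a sequence (r̃_m)_{m∈ℕ} of scaling sequences such that the iterated pretangent space Ω_{∞,(r̃_1,…,r̃_m)}^X is unbounded for every m ∈ ℕ. -/

import Mathlib

open Filter Topology

/-- A scaling sequence: a sequence of positive reals tending to infinity. -/
def ScalingSeq (r : ℕ → ℝ) : Prop :=
  (∀ n, 0 < r n) ∧ Tendsto r atTop atTop

/-- `x ∈ X̃_{∞,r̃}`: the sequence `x` satisfies `d(x_n,p) → ∞` and the finite limit
`d̃_r̃(x̃) = lim d(x_n,p)/r_n` exists.  Here `d` is the distance function of the space. -/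
def SeqAdm {Y : Type*} (d : Y → Y → ℝ) (p : Y) (r : ℕ → ℝ) (x : ℕ → Y) : Prop :=
  Tendsto (fun n => d (x n) p) atTop atTop ∧
  ∃ L : ℝ, Tendsto (fun n => d (x n) p / r n) atTop (𝓝 L)

/-- The equivalence `x̃ ≡ ỹ ⇔ lim d(x_n,y_n)/r_n = 0`. -/
def SeqEquiv {Y : Type*} (d : Y → Y → ℝ) (r : ℕ → ℝ) (x y : ℕ → Y) : Prop :=
  Tendsto (fun n => d (x n) (y n) / r n) atTop (𝓝 0)

/-- Mutual stability: the limit `lim d(x_n,y_n)/r_n` exists (and is finite). -/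
def MutStable {Y : Type*} (d : Y → Y → ℝ) (r : ℕ → ℝ) (x y : ℕ → Y) : Prop :=
  ∃ L : ℝ, Tendsto (fun n => d (x n) (y n) / r n) atTop (𝓝 L)

/-- A set of sequences representing a clique in the graph `G_{X,r̃}`: all members are
admissible, the set is a union of equivalence classes, and all members are pairwise
mutually stable. -/
def IsCliqueSet {Y : Type*} (d : Y → Y → ℝ) (p : Y) (r : ℕ → ℝ) (C : Set (ℕ → Y)) : Prop :=
  (∀ x ∈ C, SeqAdm d p r x) ∧
  (∀ x ∈ C, ∀ y, SeqAdm d p r y → SeqEquiv d r x y → y ∈ C) ∧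
  (∀ x ∈ C, ∀ y ∈ C, MutStable d r x y)

/-- A pretangent space `Ω^X_{∞,r̃}`, encoded as the (union of the) maximal clique of the
graph `G_{X,r̃}`. -/
def IsPretangent {Y : Type*} (d : Y → Y → ℝ) (p : Y) (r : ℕ → ℝ) (C : Set (ℕ → Y)) : Prop :=
  IsCliqueSet d p r C ∧ ∀ D, IsCliqueSet d p r D → C ⊆ D → D = C

/-- The point `α₀ = α₀(X,r̃)`: the class of admissible sequences with `d̃_r̃(x̃) = 0`. -/
def alphaZero {Y : Type*} (d : Y → Y → ℝ) (p : Y) (r : ℕ → ℝ) : Set (ℕ → Y) :=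
  {x | SeqAdm d p r x ∧ Tendsto (fun n => d (x n) p / r n) atTop (𝓝 0)}

/-- The metric `ρ` of a pretangent space: `ρ(α,β) = lim d(x_n,y_n)/r_n`. -/
noncomputable def seqDist {Y : Type*} (d : Y → Y → ℝ) (r : ℕ → ℝ) (x y : ℕ → Y) : ℝ :=
  limUnder atTop (fun n => d (x n) (y n) / r n)

/-- `l(∞,h,E)`: the length of the longest interval contained in `[0,h] \ E`. -/
noncomputable def gapLen (E : Set ℝ) (h : ℝ) : ℝ :=
  sSup {d : ℝ | ∃ a b : ℝ, a ≤ b ∧ d = b - a ∧ Set.Ioo a b ⊆ Set.Icc 0 h \ E}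

/-- The porosity of `E ⊆ ℝ⁺` at infinity: `p(E,∞) = limsup_{h→∞} l(∞,h,E)/h`. -/
noncomputable def porosityAtInfty (E : Set ℝ) : ℝ :=
  Filter.limsup (fun h => gapLen E h / h) atTop

/-- `E` is strongly porous at infinity if `p(E,∞) = 1`. -/
def StronglyPorousAtInfty (E : Set ℝ) : Prop :=
  porosityAtInfty E = 1

/-!
Zero porosity of `S_p(X)` at infinity means that the distances to `p` are relatively dense at
infinity: every large `v` lies within `δ v` of some `d(x, p)`. This property reproduces itself in
a pretangent space. Choose sequences `x k` with `d(x k n, p) ≈ (k + 1) r n` and pass to a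
subsequence of the scales along which all ratios `d(x k n, x j n) / r n` converge; then the classes
of the `x k` lie in one maximal clique, in which `k ≤ ρ(x k, x 0) ≤ k + 2`. Marked at `x 0`, the
pretangent space again has relatively dense distances, so it is unbounded and the construction
can be repeated.
-/

lemma sub_le_of_Ioo_subset_Icc {a b h : ℝ} (hab : a ≤ b) (hsub : Set.Ioo a b ⊆ Set.Icc 0 h)
    (hh : 0 ≤ h) : b - a ≤ h := by
  rcases hab.eq_or_lt with rfl | hab
  · simpa using hh
  have hIcc : Set.Icc a b ⊆ Set.Icc 0 h :=
    closure_Ioo hab.ne ▸ closure_minimal hsub isClosed_Icc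
  obtain ⟨ha, hb⟩ := (Set.Icc_subset_Icc_iff hab.le).1 hIcc
  linarith

lemma gapLen_le (E : Set ℝ) {h : ℝ} (hh : 0 ≤ h) : gapLen E h ≤ h :=
  csSup_le ⟨0, 0, 0, le_rfl, by simp, by simp⟩ fun _ ⟨_, _, hab, hd, hsub⟩ =>
    hd ▸ sub_le_of_Ioo_subset_Icc hab (hsub.trans Set.sdiff_subset) hh

lemma le_gapLen {E : Set ℝ} {a b h : ℝ} (hh : 0 ≤ h) (hab : a ≤ b)
    (hsub : Set.Ioo a b ⊆ Set.Icc 0 h \ E) : b - a ≤ gapLen E h :=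
  le_csSup ⟨h, fun _ ⟨_, _, hab, hd, hsub⟩ =>
    hd ▸ sub_le_of_Ioo_subset_Icc hab (hsub.trans Set.sdiff_subset) hh⟩ ⟨a, b, hab, rfl, hsub⟩

/-- Otherwise `(v, (1 + δ) v)` is a gap of relative size `δ / (1 + δ)` in `[0, (1 + δ) v]`. -/
theorem eventually_exists_mem_abs_sub_le_of_porosityAtInfty_eq_zero {E : Set ℝ}
    (hE : porosityAtInfty E = 0) {δ : ℝ} (hδ : 0 < δ) :
    ∀ᶠ v in atTop, ∃ e ∈ E, |e - v| ≤ δ * v := by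
  have hbdd : IsBoundedUnder (· ≤ ·) atTop fun h => gapLen E h / h :=
    isBoundedUnder_of_eventually_le (a := 1) <| (eventually_gt_atTop 0).mono fun h hh =>
      div_le_one_of_le₀ (gapLen_le E hh.le) hh.le
  have hsmall : ∀ᶠ h in atTop, gapLen E h / h < δ / (1 + δ) :=
    eventually_lt_of_limsup_lt (hE.trans_lt (by positivity)) hbdd
  have hscale : Tendsto (fun v : ℝ => (1 + δ) * v) atTop atTop :=
    tendsto_id.const_mul_atTop (by positivity)
  filter_upwards [hscale.eventually hsmall, eventually_gt_atTop 0] with v hv hv0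
  by_contra! hfar
  have hgap : Set.Ioo v ((1 + δ) * v) ⊆ Set.Icc 0 ((1 + δ) * v) \ E := by
    refine fun e he => ⟨⟨by linarith [he.1], he.2.le⟩, fun heE => ?_⟩
    have := hfar e heE
    rw [abs_of_pos (by linarith [he.1])] at this
    linarith [he.2]
  have hlen := le_gapLen (by positivity) (by nlinarith) hgap
  rw [div_lt_div_iff₀ (by positivity) (by positivity)] at hv
  nlinarith

def DistancesDenseAtTop {α : Type*} (d : α → α → ℝ) (q : α) : Prop :=
  ∀ δ > 0, ∀ᶠ v in atTop, ∃ y, |d y q - v| ≤ δ * v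

namespace DistancesDenseAtTop

variable {α : Type*} {d : α → α → ℝ} {q : α}

theorem of_porosityAtInfty_eq_zero (h : porosityAtInfty (Set.range fun y => d y q) = 0) :
    DistancesDenseAtTop d q := fun _ hδ =>
  (eventually_exists_mem_abs_sub_le_of_porosityAtInfty_eq_zero h hδ).mono
    fun _ ⟨_, ⟨y, rfl⟩, he⟩ => ⟨y, he⟩

theorem of_forall_nat {c : ℝ} (h : ∀ k : ℕ, ∃ y, |d y q - k| ≤ c) : DistancesDenseAtTop d q := by
  intro δ hδ
  filter_upwards [eventually_ge_atTop ((c + 1) / δ), eventually_ge_atTop 0] with v hv hv0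
  obtain ⟨y, hy⟩ := h ⌊v⌋₊
  have hfloor : |(⌊v⌋₊ : ℝ) - v| ≤ 1 := by
    rw [abs_le]
    constructor <;> linarith [Nat.floor_le hv0, Nat.lt_floor_add_one v]
  refine ⟨y, ?_⟩
  calc |d y q - v| ≤ |d y q - ⌊v⌋₊| + |(⌊v⌋₊ : ℝ) - v| := abs_sub_le _ _ _
    _ ≤ c + 1 := add_le_add hy hfloor
    _ ≤ δ * v := (div_le_iff₀' hδ).1 hv

theorem exists_lt (h : DistancesDenseAtTop d q) (M : ℝ) : ∃ y, M < d y q := by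
  obtain ⟨v, hv, hvM⟩ := ((h (1 / 2) (by norm_num)).and (eventually_gt_atTop (2 * M))).exists
  obtain ⟨y, hy⟩ := hv
  exact ⟨y, by linarith [(abs_le.1 hy).1]⟩

/-- `r n` is taken beyond the threshold of the density condition for `δ = 1 / (n + 1)`. -/
theorem exists_scalingSeq_ray (h : DistancesDenseAtTop d q) :
    ∃ r, ScalingSeq r ∧ ∃ x : ℕ → ℕ → α, ∀ k n : ℕ, |d (x k n) q / r n - (k + 1)| ≤ (k + 1) / (n + 1) := by
  have hH : ∀ n : ℕ, ∃ H, ∀ v ≥ H, ∃ y, |d y q - v| ≤ 1 / (n + 1) * v :=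
    fun n => eventually_atTop.1 (h _ (by positivity))
  choose H hH using hH
  set r : ℕ → ℝ := fun n => max (n + 1) (H n)
  have hr : ∀ n : ℕ, (n : ℝ) + 1 ≤ r n := fun n => le_max_left _ _
  have hpos : ∀ n, 0 < r n := fun n => (by positivity : (0 : ℝ) < n + 1).trans_le (hr n)
  have hpt : ∀ k n : ℕ, ∃ y, |d y q - (k + 1) * r n| ≤ 1 / (n + 1) * ((k + 1) * r n) :=
    fun k n => hH n _ <| (le_max_right _ _).trans <|
      le_mul_of_one_le_left (hpos n).le (by simp)
  choose x hx using hpt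
  have hr_tendsto : Tendsto r atTop atTop :=
    tendsto_atTop_mono (fun n => (le_add_of_nonneg_right zero_le_one).trans (hr n))
      tendsto_natCast_atTop_atTop
  refine ⟨r, ⟨hpos, hr_tendsto⟩, x, fun k n => ?_⟩
  have hsub : d (x k n) q / r n - (k + 1) = (d (x k n) q - (k + 1) * r n) / r n := by
    rw [sub_div, mul_div_cancel_right₀ _ (hpos n).ne']
  rw [hsub, abs_div, abs_of_pos (hpos n), div_le_iff₀ (hpos n)]
  simpa only [div_mul_eq_mul_div, one_mul, mul_div_assoc] using hx k n

end DistancesDenseAtTop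

theorem IsCliqueSet.exists_isPretangent_superset {Y : Type*} {d : Y → Y → ℝ} {p : Y}
    {r : ℕ → ℝ} {C : Set (ℕ → Y)} (hC : IsCliqueSet d p r C) :
    ∃ D, C ⊆ D ∧ IsPretangent d p r D := by
  have hchain : ∀ c ⊆ {D | IsCliqueSet d p r D ∧ C ⊆ D}, IsChain (· ⊆ ·) c → c.Nonempty →
      ∃ ub ∈ {D | IsCliqueSet d p r D ∧ C ⊆ D}, ∀ D ∈ c, D ⊆ ub := by
    rintro c hc hchain ⟨D₀, hD₀⟩
    refine ⟨⋃₀ c, ⟨⟨?_, ?_, ?_⟩, (hc hD₀).2.trans (Set.subset_sUnion_of_mem hD₀)⟩,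
      fun D hD => Set.subset_sUnion_of_mem hD⟩
    · rintro x ⟨D, hD, hx⟩
      exact (hc hD).1.1 x hx
    · rintro x ⟨D, hD, hx⟩ y hy hxy
      exact ⟨D, hD, (hc hD).1.2.1 x hx y hy hxy⟩
    · rintro x ⟨D₁, hD₁, hx⟩ y ⟨D₂, hD₂, hy⟩
      rcases hchain.total hD₁ hD₂ with h | h
      · exact (hc hD₂).1.2.2 x (h hx) y hy
      · exact (hc hD₁).1.2.2 x hx y (h hy)
  obtain ⟨D, hCD, hmax⟩ := zorn_subset_nonempty _ hchain C ⟨hC, subset_rfl⟩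
  exact ⟨D, hCD, hmax.prop.1, fun E hE hDE =>
    (hmax.eq_of_subset ⟨hE, hCD.trans hDE⟩ hDE).symm⟩

def seqSaturation {Y : Type*} (d : Y → Y → ℝ) (p : Y) (r : ℕ → ℝ) (S : Set (ℕ → Y)) :
    Set (ℕ → Y) :=
  {y | SeqAdm d p r y ∧ ∃ x ∈ S, SeqEquiv d r y x}

section PseudoMetric

variable {α : Type*} [PseudoMetricSpace α] {r : ℕ → ℝ}

theorem seqEquiv_refl (x : ℕ → α) : SeqEquiv dist r x x := by
  simp only [SeqEquiv, dist_self, zero_div]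
  exact tendsto_const_nhds

theorem SeqEquiv.symm {x y : ℕ → α} (h : SeqEquiv dist r x y) : SeqEquiv dist r y x := by
  simpa only [SeqEquiv, dist_comm] using h

theorem tendsto_dist_div_of_seqEquiv (hr : ∀ n, 0 ≤ r n) {x x' y y' : ℕ → α} {L : ℝ}
    (hx : SeqEquiv dist r x x') (hy : SeqEquiv dist r y y')
    (h : Tendsto (fun n => dist (x' n) (y' n) / r n) atTop (𝓝 L)) :
    Tendsto (fun n => dist (x n) (y n) / r n) atTop (𝓝 L) := by
  refine tendsto_of_tendsto_of_dist h <|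
    squeeze_zero (fun _ => dist_nonneg) (fun n => ?_) (by simpa using hx.add hy)
  rw [Real.dist_eq, ← sub_div, abs_div, abs_of_nonneg (hr n), ← add_div]
  refine div_le_div_of_nonneg_right ?_ (hr n)
  rw [abs_sub_comm, ← Real.dist_eq]
  exact dist_dist_dist_le _ _ _ _

theorem SeqEquiv.trans (hr : ∀ n, 0 ≤ r n) {x y z : ℕ → α} (hxy : SeqEquiv dist r x y)
    (hyz : SeqEquiv dist r y z) : SeqEquiv dist r x z :=
  tendsto_dist_div_of_seqEquiv hr hxy (seqEquiv_refl z) hyz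

theorem subset_seqSaturation {p : α} {S : Set (ℕ → α)} (hS : ∀ x ∈ S, SeqAdm dist p r x) :
    S ⊆ seqSaturation dist p r S :=
  fun x hx => ⟨hS x hx, x, hx, seqEquiv_refl x⟩

theorem isCliqueSet_seqSaturation (hr : ∀ n, 0 ≤ r n) (p : α) {S : Set (ℕ → α)}
    (hS : ∀ x ∈ S, ∀ y ∈ S, MutStable dist r x y) :
    IsCliqueSet dist p r (seqSaturation dist p r S) := by
  refine ⟨fun y hy => hy.1, ?_, ?_⟩
  · rintro y ⟨-, x, hx, hyx⟩ z hz hyz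
    exact ⟨hz, x, hx, hyz.symm.trans hr hyx⟩
  · rintro y ⟨-, x, hx, hyx⟩ z ⟨-, w, hw, hzw⟩
    obtain ⟨L, hL⟩ := hS x hx w hw
    exact ⟨L, tendsto_dist_div_of_seqEquiv hr hyx hzw hL⟩

noncomputable abbrev seqDistPseudoMetricSpace (hr : ∀ n, 0 ≤ r n) {C : Set (ℕ → α)}
    (hC : ∀ x ∈ C, ∀ y ∈ C, MutStable dist r x y) : PseudoMetricSpace C where
  dist a b := seqDist dist r a.1 b.1
  dist_self a := by simpa [seqDist] using tendsto_const_nhds.limUnder_eq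
  dist_comm a b := by simp only [seqDist, dist_comm]
  dist_triangle a b c := by
    obtain ⟨Lac, hac⟩ := hC a a.2 c c.2
    obtain ⟨Lab, hab⟩ := hC a a.2 b b.2
    obtain ⟨Lbc, hbc⟩ := hC b b.2 c c.2
    simp only [seqDist, hac.limUnder_eq, hab.limUnder_eq, hbc.limUnder_eq]
    refine le_of_tendsto_of_tendsto' hac (hab.add hbc) fun n => ?_
    rw [← add_div]
    exact div_le_div_of_nonneg_right (dist_triangle _ _ _) (hr n)

theorem abs_sub_le_and_le_add_of_tendsto (hr : ∀ n, 0 ≤ r n) {q : α} {x y : ℕ → α}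
    {a b L : ℝ} (hx : Tendsto (fun n => dist (x n) q / r n) atTop (𝓝 a))
    (hy : Tendsto (fun n => dist (y n) q / r n) atTop (𝓝 b))
    (hxy : Tendsto (fun n => dist (x n) (y n) / r n) atTop (𝓝 L)) :
    |a - b| ≤ L ∧ L ≤ a + b := by
  constructor
  · refine le_of_tendsto_of_tendsto' (hx.sub hy).abs hxy fun n => ?_
    rw [← sub_div, abs_div, abs_of_nonneg (hr n)]
    exact div_le_div_of_nonneg_right (abs_dist_sub_le _ _ _) (hr n)
  · refine le_of_tendsto_of_tendsto' hxy (hx.add hy) fun n => ?_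
    rw [← add_div]
    exact div_le_div_of_nonneg_right (dist_triangle_right _ _ _) (hr n)

end PseudoMetric

theorem seqAdm_of_tendsto {Y : Type*} {d : Y → Y → ℝ} {p : Y} {r : ℕ → ℝ} {x : ℕ → Y}
    {a : ℝ} (hr : ScalingSeq r) (ha : 0 < a)
    (hx : Tendsto (fun n => d (x n) p / r n) atTop (𝓝 a)) : SeqAdm d p r x :=
  ⟨((hx.pos_mul_atTop ha hr.2).congr fun n => div_mul_cancel₀ _ (hr.1 n).ne'), a, hx⟩

theorem exists_strictMono_tendsto_of_abs_le {ι : Type*} [Countable ι] {f : ℕ → ι → ℝ}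
    {B : ι → ℝ} (h : ∀ n i, |f n i| ≤ B i) :
    ∃ φ : ℕ → ℕ, StrictMono φ ∧ ∃ L, Tendsto (f ∘ φ) atTop (𝓝 L) := by
  obtain ⟨L, -, φ, hφ, hL⟩ := (isCompact_univ_pi fun i => isCompact_Icc).isSeqCompact
    fun n i _ => abs_le.1 (h n i)
  exact ⟨φ, hφ, L, hL⟩

namespace DistancesDenseAtTop

variable {α : Type*} [PseudoMetricSpace α] {q : α}

/-- The ratios `dist (x k n) (x j n) / r n` are bounded by `2 (k + 1) + 2 (j + 1)`, so they all
converge along one subsequence of the scales. -/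
theorem exists_scalingSeq_ray_mutStable (h : DistancesDenseAtTop dist q) :
    ∃ r, ScalingSeq r ∧ ∃ x : ℕ → ℕ → α,
      (∀ k : ℕ, Tendsto (fun n => dist (x k n) q / r n) atTop (𝓝 (k + 1))) ∧
      ∀ k j, MutStable dist r (x k) (x j) := by
  obtain ⟨r, hr, x, hx⟩ := h.exists_scalingSeq_ray
  have hratio : ∀ k n : ℕ, dist (x k n) q / r n ≤ 2 * (k + 1) := fun k n => by
    have hn : (k + 1 : ℝ) / (n + 1) ≤ k + 1 := div_le_self (by positivity) (by simp)
    linarith [(abs_le.1 (hx k n)).2]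
  have hbound : ∀ n (kj : ℕ × ℕ),
      |dist (x kj.1 n) (x kj.2 n) / r n| ≤ 2 * (kj.1 + 1) + 2 * (kj.2 + 1) := fun n kj => by
    rw [abs_of_nonneg (div_nonneg dist_nonneg (hr.1 n).le)]
    calc dist (x kj.1 n) (x kj.2 n) / r n
        ≤ dist (x kj.1 n) q / r n + dist (x kj.2 n) q / r n := by
          rw [← add_div]
          exact div_le_div_of_nonneg_right (dist_triangle_right _ _ _) (hr.1 n).le
      _ ≤ 2 * (kj.1 + 1) + 2 * (kj.2 + 1) := add_le_add (hratio _ _) (hratio _ _)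
  obtain ⟨φ, hφ, L, hL⟩ := exists_strictMono_tendsto_of_abs_le hbound
  have hlim : ∀ k : ℕ, Tendsto (fun n => dist (x k n) q / r n) atTop (𝓝 (k + 1)) := fun k => by
    refine tendsto_of_tendsto_of_dist tendsto_const_nhds <| squeeze_zero (fun _ => dist_nonneg)
      (fun n => ?_) (by simpa only [mul_zero] using
        tendsto_one_div_add_atTop_nhds_zero_nat.const_mul ((k : ℝ) + 1))
    rw [dist_comm, Real.dist_eq, mul_one_div]
    exact hx k n
  exact ⟨r ∘ φ, ⟨fun n => hr.1 _, hr.2.comp hφ.tendsto_atTop⟩, fun k n => x k (φ n),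
    fun k => (hlim k).comp hφ.tendsto_atTop, fun k j => ⟨L (k, j), tendsto_pi_nhds.1 hL (k, j)⟩⟩

/-- Any maximal clique through the classes of the `x k` works, marked at `x 0`:
`k ≤ ρ(x k, x 0) ≤ k + 2`. -/
theorem exists_isPretangent (h : DistancesDenseAtTop dist q) :
    ∃ r, ScalingSeq r ∧ ∃ C, IsPretangent dist q r C ∧ ∃ (x₀ : ℕ → α) (hx₀ : x₀ ∈ C),
      DistancesDenseAtTop (fun a b : {x // x ∈ C} => seqDist dist r a.1 b.1) ⟨x₀, hx₀⟩ := by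
  obtain ⟨r, hr, x, hxq, hxx⟩ := h.exists_scalingSeq_ray_mutStable
  have hr₀ : ∀ n, 0 ≤ r n := fun n => (hr.1 n).le
  have hstable : ∀ y ∈ Set.range x, ∀ z ∈ Set.range x, MutStable dist r y z := by
    rintro _ ⟨k, rfl⟩ _ ⟨j, rfl⟩
    exact hxx k j
  have hadm : ∀ y ∈ Set.range x, SeqAdm dist q r y := by
    rintro _ ⟨k, rfl⟩
    exact seqAdm_of_tendsto hr (by positivity) (hxq k)
  obtain ⟨C, hsat, hC⟩ := (isCliqueSet_seqSaturation hr₀ q hstable).exists_isPretangent_superset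
  have hxC : ∀ k, x k ∈ C := fun k => hsat (subset_seqSaturation hadm ⟨k, rfl⟩)
  refine ⟨r, hr, C, hC, x 0, hxC 0, of_forall_nat (c := 2) fun k => ⟨⟨x k, hxC k⟩, ?_⟩⟩
  obtain ⟨L, hL⟩ := hxx k 0
  obtain ⟨hlow, hup⟩ := abs_sub_le_and_le_add_of_tendsto hr₀ (hxq k) (hxq 0) hL
  rw [seqDist, hL.limUnder_eq, abs_le]
  norm_num at hlow hup
  constructor <;> linarith

end DistancesDenseAtTop

def IsDensePointedPseudometric (s : Σ α : Type, (α → α → ℝ) × α) : Prop :=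
  (∃ m : PseudoMetricSpace s.1, m.dist = s.2.1) ∧ DistancesDenseAtTop s.2.1 s.2.2

theorem IsDensePointedPseudometric.exists_isPretangent {s : Σ α : Type, (α → α → ℝ) × α}
    (hs : IsDensePointedPseudometric s) :
    ∃ (r : ℕ → ℝ) (C : Set (ℕ → s.1)) (x₀ : ℕ → s.1) (hx₀ : x₀ ∈ C),
      ScalingSeq r ∧ IsPretangent s.2.1 s.2.2 r C ∧
      IsDensePointedPseudometric
        ⟨{x // x ∈ C}, (fun a b => seqDist s.2.1 r a.1 b.1, ⟨x₀, hx₀⟩)⟩ := by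
  obtain ⟨⟨m, hm⟩, hq⟩ := hs
  rw [← hm] at hq ⊢
  obtain ⟨r, hr, C, hC, x₀, hx₀, hdense⟩ := hq.exists_isPretangent
  exact ⟨r, C, x₀, hx₀, hr, hC,
    ⟨seqDistPseudoMetricSpace (fun n => (hr.1 n).le) hC.1.2.2, rfl⟩, hdense⟩

theorem iterated_unbounded_pretangent_general (X : Type) [MetricSpace X] (p : X)
    (hpor : porosityAtInfty (Set.range fun x : X => dist x p) = 0) :
    ∃ (Y : ℕ → Σ α : Type, (α → α → ℝ) × α) (r : ℕ → ℕ → ℝ),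
      Y 0 = ⟨X, (dist, p)⟩ ∧
      ∀ m : ℕ, ScalingSeq (r m) ∧
        ∃ (C : Set (ℕ → (Y m).1)) (_ : IsPretangent (Y m).2.1 (Y m).2.2 (r m) C)
          (x₀ : ℕ → (Y m).1) (hx₀ : x₀ ∈ C),
          Y (m + 1) = ⟨{x : ℕ → (Y m).1 // x ∈ C},
            (fun a b => seqDist (Y m).2.1 (r m) a.1 b.1, ⟨x₀, hx₀⟩)⟩ ∧
          (∀ M : ℝ, ∃ a ∈ C, ∃ b ∈ C, M < seqDist (Y m).2.1 (r m) a b) := by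
  have h₀ : IsDensePointedPseudometric ⟨X, (dist, p)⟩ :=
    ⟨⟨inferInstance, rfl⟩, .of_porosityAtInfty_eq_zero hpor⟩
  choose r C x₀ hx₀ hr hC hnext using @IsDensePointedPseudometric.exists_isPretangent
  let Y : ℕ → {s // IsDensePointedPseudometric s} :=
    fun m => Nat.rec ⟨_, h₀⟩ (fun _ s => ⟨_, hnext s.2⟩) m
  refine ⟨fun m => (Y m).1, fun m => r (Y m).2, rfl, fun m =>
    ⟨hr _, C (Y m).2, hC _, x₀ _, hx₀ _, rfl, fun M => ?_⟩⟩
  obtain ⟨⟨a, ha⟩, hM⟩ := (Y (m + 1)).2.2.exists_lt M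
  exact ⟨a, ha, _, hx₀ _, hM⟩

/-- Let `(X,d)` be an unbounded metric space and `p ∈ X`.  If the
porosity at infinity of `S_p(X) = {d(x,p) : x ∈ X}` is `0`, then there is a sequence
`(r̃ₘ)` of scaling sequences such that every iterated pretangent space
`Ω^X_{∞,(r̃₁,…,r̃ₘ)}` is unbounded.  The iterated spaces are encoded as a chain
`Y : ℕ → Σ α, (α → α → ℝ) × α` of spaces-with-distance-and-marked-point: `Y 0` is
`(X, dist, p)`, and `Y (m+1)` is realized on a pretangent clique `C` of `Y m` w.r.t.
`r̃ₘ` (with the metric `ρ = seqDist` of the pretangent space and some marked point of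
it), and every `Y (m+1)` is unbounded. -/
theorem iterated_unbounded_pretangent (X : Type) [MetricSpace X]
    (hX : ¬ Bornology.IsBounded (Set.univ : Set X)) (p : X)
    (hpor : porosityAtInfty (Set.range fun x : X => dist x p) = 0) :
    ∃ (Y : ℕ → Σ α : Type, (α → α → ℝ) × α) (r : ℕ → ℕ → ℝ),
      Y 0 = ⟨X, (dist, p)⟩ ∧
      ∀ m : ℕ, ScalingSeq (r m) ∧
        ∃ (C : Set (ℕ → (Y m).1)) (_ : IsPretangent (Y m).2.1 (Y m).2.2 (r m) C)
          (x₀ : ℕ → (Y m).1) (hx₀ : x₀ ∈ C),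
          Y (m + 1) = ⟨{x : ℕ → (Y m).1 // x ∈ C},
            (fun a b => seqDist (Y m).2.1 (r m) a.1 b.1, ⟨x₀, hx₀⟩)⟩ ∧
          (∀ M : ℝ, ∃ a ∈ C, ∃ b ∈ C, M < seqDist (Y m).2.1 (r m) a b) :=
  iterated_unbounded_pretangent_general X p hpor
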